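/- Let z ∈ ℝ^V be a logit vector with V ≥ 2, and suppose the logit margin satisfies max_k z_k - (1/V)∑_k z_k ≤ δ for some δ ≥ 0. Then the maximum softmax probability is bounded: max_k exp(z_k)/∑_j exp(z_j) ≤ 1/(1 + (V-1)·exp(-(V/(V-1))·δ)). -/
import Mathlib


/-- If the logit margin `max_k z_k - (1/V) ∑_k z_k ≤ δ` with `δ ≥ 0` and `V ≥ 2`,
then the maximum softmax probability is at most `1/(1 + (V-1)·exp(-(V/(V-1))·δ))`. -/
theorem logit_margin_softmax_bound (V : ℕ) (hV : 2 ≤ V) (z : Fin V → ℝ) (δ : ℝ) (hδ : 0 ≤ δ)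
    (hmargin : Finset.univ.sup' (Finset.univ_nonempty_iff.mpr ⟨⟨0, by omega⟩⟩) z
      - (∑ k, z k) / V ≤ δ) :
    Finset.univ.sup' (Finset.univ_nonempty_iff.mpr ⟨⟨0, by omega⟩⟩)
        (fun k => Real.exp (z k) / ∑ j, Real.exp (z j))
      ≤ 1 / (1 + (V - 1) * Real.exp (-((V : ℝ) / (V - 1)) * δ)) := by
  have hne : (Finset.univ : Finset (Fin V)).Nonempty :=
    Finset.univ_nonempty_iff.mpr ⟨⟨0, by omega⟩⟩
  set M : ℝ := Finset.univ.sup' hne z with hM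
  obtain ⟨k₀, -, hk₀⟩ := Finset.exists_mem_eq_sup' hne z
  have hVR : (1:ℝ) < (V:ℝ) := by exact_mod_cast hV.trans_lt' (by norm_num)
  have hV1 : (0:ℝ) < (V:ℝ) - 1 := by linarith
  have hVpos : (0:ℝ) < (V:ℝ) := by linarith
  set E : ℝ := Real.exp (-((V : ℝ) / (V - 1)) * δ) with hE
  have hEpos : 0 < E := Real.exp_pos _
  have hD : 0 < 1 + ((V:ℝ) - 1) * E := by positivity
  set T : ℝ := ∑ j, Real.exp (z j) with hT
  -- cardinality of erase
  have hcard : ((Finset.univ.erase k₀).card : ℝ) = (V:ℝ) - 1 := by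
    rw [Finset.card_erase_of_mem (Finset.mem_univ _)]
    simp
    rw [Nat.cast_sub (by omega)]
    simp
  -- Jensen
  have hjensen : Real.exp ((∑ j ∈ Finset.univ.erase k₀, z j) / ((V:ℝ) - 1))
      ≤ (∑ j ∈ Finset.univ.erase k₀, Real.exp (z j)) / ((V:ℝ) - 1) := by
    have h := convexOn_exp.map_sum_le (t := Finset.univ.erase k₀)
      (w := fun _ => 1 / ((V:ℝ) - 1)) (p := z)
      (fun i _ => by positivity)
      (by rw [Finset.sum_const, nsmul_eq_mul, hcard]; field_simp)
      (fun i _ => Set.mem_univ _)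
    simp only [smul_eq_mul, ← Finset.mul_sum, one_div] at h
    rwa [inv_mul_eq_div, inv_mul_eq_div] at h
  have hsum_erase : ∑ j ∈ Finset.univ.erase k₀, z j = (∑ k, z k) - M := by
    rw [hM, hk₀]; exact Finset.sum_erase_eq_sub (Finset.mem_univ _)
  -- margin gives lower bound on mean of others
  have hS : (V:ℝ) * (M - δ) ≤ ∑ k, z k := by
    have h2 : M - δ ≤ (∑ k, z k) / V := by
      have := hmargin; linarith
    calc (V:ℝ) * (M - δ) ≤ (V:ℝ) * ((∑ k, z k) / V) := by
          exact mul_le_mul_of_nonneg_left h2 hVpos.le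
      _ = ∑ k, z k := by field_simp
  have hmean : M + (-((V : ℝ) / (V - 1)) * δ)
      ≤ (∑ j ∈ Finset.univ.erase k₀, z j) / ((V:ℝ) - 1) := by
    rw [hsum_erase]
    rw [le_div_iff₀ hV1]
    have : (M + -((V : ℝ) / (V - 1)) * δ) * ((V:ℝ) - 1)
        = (V:ℝ) * (M - δ) - M + ((V:ℝ) * δ - (V:ℝ)/((V:ℝ)-1) * δ * ((V:ℝ)-1)) := by ring
    rw [this]
    have hz : (V:ℝ)/((V:ℝ)-1) * δ * ((V:ℝ)-1) = (V:ℝ) * δ := by field_simp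
    rw [hz]
    linarith
  -- lower bound on T
  have hTlow : Real.exp M * (1 + ((V:ℝ) - 1) * E) ≤ T := by
    have h1 : (((V:ℝ)) - 1) * (Real.exp M * E)
        ≤ ∑ j ∈ Finset.univ.erase k₀, Real.exp (z j) := by
      have := (Real.exp_le_exp.mpr hmean).trans hjensen
      rw [Real.exp_add, ← hE] at this
      calc (((V:ℝ)) - 1) * (Real.exp M * E)
          ≤ (((V:ℝ)) - 1) * ((∑ j ∈ Finset.univ.erase k₀, Real.exp (z j)) / ((V:ℝ) - 1)) :=
            mul_le_mul_of_nonneg_left this hV1.le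
        _ = _ := by field_simp
    have h2 : T = Real.exp (z k₀) + ∑ j ∈ Finset.univ.erase k₀, Real.exp (z j) := by
      rw [hT, ← Finset.add_sum_erase _ _ (Finset.mem_univ k₀)]
    rw [h2, ← hk₀, ← hM]
    ring_nf
    nlinarith [Real.exp_pos M]
  have hTpos : 0 < T := lt_of_lt_of_le (by positivity) hTlow
  apply Finset.sup'_le
  intro k _
  have hzk : Real.exp (z k) ≤ Real.exp M :=
    Real.exp_le_exp.mpr (Finset.le_sup' z (Finset.mem_univ k))
  have : Real.exp (z k) / T ≤ Real.exp M / (Real.exp M * (1 + ((V:ℝ) - 1) * E)) :=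
    div_le_div₀ (Real.exp_pos M).le hzk (by positivity) hTlow
  calc Real.exp (z k) / T ≤ Real.exp M / (Real.exp M * (1 + ((V:ℝ) - 1) * E)) := this
    _ = 1 / (1 + ((V:ℝ) - 1) * E) := by
        rw [div_mul_eq_div_div, div_self (Real.exp_pos M).ne']
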